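/- For fixed m and x̄, the function q ↦ ((m - x̄)² + q) Φ((m - x̄)/√q) + (m - x̄) √(q/(2π)) exp(-(m - x̄)²/(2q)) is monotone increasing on (0, ∞). -/

import Mathlib

/-!
Write `a = m - x̄` and `q = s²`. In terms of the standard deviation `s` the penalty is
`(a² + s²) Φ(a/s) + a s φ(a/s)`, and because `φ'(t) = -t φ(t)` every term involving `φ` cancels
on differentiation, leaving the derivative `2 s Φ(a/s) ≥ 0`. Composing with the monotone map
`q ↦ √q` gives the claim.
-/

open Real MeasureTheory

/-- Standard normal CDF. -/
noncomputable def stdNormalCDF (t : ℝ) : ℝ :=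
  ∫ y in Set.Iic t, (Real.sqrt (2 * Real.pi))⁻¹ * Real.exp (-(y ^ 2) / 2)

open Set

noncomputable def stdNormalPDF (t : ℝ) : ℝ :=
  (√(2 * π))⁻¹ * exp (-(t ^ 2) / 2)

lemma stdNormalPDF_nonneg (t : ℝ) : 0 ≤ stdNormalPDF t := by
  unfold stdNormalPDF; positivity

lemma continuous_stdNormalPDF : Continuous stdNormalPDF := by
  unfold stdNormalPDF; fun_prop

lemma integrable_stdNormalPDF : Integrable stdNormalPDF := by
  have h := (integrable_exp_neg_mul_sq (b := 1 / 2) (by norm_num)).const_mul (√(2 * π))⁻¹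
  convert h using 3 with t
  unfold stdNormalPDF; ring_nf

lemma hasDerivAt_stdNormalPDF (t : ℝ) : HasDerivAt stdNormalPDF (-t * stdNormalPDF t) t := by
  have hu : HasDerivAt (fun t : ℝ => -(t ^ 2) / 2) (-t) t :=
    ((hasDerivAt_pow 2 t).neg.div_const 2).congr_deriv (by ring)
  refine (hu.exp.const_mul (√(2 * π))⁻¹).congr_deriv ?_
  simp only [stdNormalPDF]
  ring

lemma stdNormalCDF_eq_add_intervalIntegral (t : ℝ) :
    stdNormalCDF t = stdNormalCDF 0 + ∫ y in (0 : ℝ)..t, stdNormalPDF y := by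
  rw [← intervalIntegral.integral_Iic_sub_Iic integrable_stdNormalPDF.integrableOn
    integrable_stdNormalPDF.integrableOn]
  simp only [stdNormalCDF, stdNormalPDF, add_sub_cancel]

lemma hasDerivAt_stdNormalCDF (t : ℝ) : HasDerivAt stdNormalCDF (stdNormalPDF t) t := by
  rw [funext stdNormalCDF_eq_add_intervalIntegral]
  exact (intervalIntegral.integral_hasDerivAt_right integrable_stdNormalPDF.intervalIntegrable
    continuous_stdNormalPDF.aestronglyMeasurable.stronglyMeasurableAtFilter
    continuous_stdNormalPDF.continuousAt).const_add _

lemma stdNormalCDF_nonneg (t : ℝ) : 0 ≤ stdNormalCDF t :=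
  setIntegral_nonneg measurableSet_Iic fun y _ => stdNormalPDF_nonneg y

noncomputable def penaltyOfStdDev (a s : ℝ) : ℝ :=
  (a ^ 2 + s ^ 2) * stdNormalCDF (a / s) + a * s * stdNormalPDF (a / s)

lemma hasDerivAt_penaltyOfStdDev (a : ℝ) {s : ℝ} (hs : s ≠ 0) :
    HasDerivAt (penaltyOfStdDev a) (2 * s * stdNormalCDF (a / s)) s := by
  have ht : HasDerivAt (fun s => a / s) (-a / s ^ 2) s := by
    simpa [div_eq_mul_inv, neg_div] using (hasDerivAt_inv hs).const_mul a
  have hΦ : HasDerivAt (fun s => stdNormalCDF (a / s)) (stdNormalPDF (a / s) * (-a / s ^ 2)) s :=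
    (hasDerivAt_stdNormalCDF _).comp s ht
  have hφ : HasDerivAt (fun s => stdNormalPDF (a / s))
      (-(a / s) * stdNormalPDF (a / s) * (-a / s ^ 2)) s :=
    (hasDerivAt_stdNormalPDF _).comp s ht
  refine ((((hasDerivAt_pow 2 s).const_add (a ^ 2)).mul hΦ).add
    (((hasDerivAt_id' s).const_mul a).mul hφ)).congr_deriv ?_
  field_simp
  ring

lemma monotoneOn_penaltyOfStdDev (a : ℝ) : MonotoneOn (penaltyOfStdDev a) (Ioi 0) := by
  refine monotoneOn_of_hasDerivWithinAt_nonneg (f' := fun s => 2 * s * stdNormalCDF (a / s))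
    (convex_Ioi 0)
    (fun s hs => (hasDerivAt_penaltyOfStdDev a (ne_of_gt hs)).continuousAt.continuousWithinAt)
    (fun s hs => ?_) (fun s hs => ?_) <;> rw [interior_Ioi] at hs
  · exact (hasDerivAt_penaltyOfStdDev a (ne_of_gt hs)).hasDerivWithinAt
  · exact mul_nonneg (mul_nonneg zero_le_two (le_of_lt hs)) (stdNormalCDF_nonneg _)

lemma penalty_eq_penaltyOfStdDev (a : ℝ) {q : ℝ} (hq : 0 ≤ q) :
    (a ^ 2 + q) * stdNormalCDF (a / √q) + a * √(q / (2 * π)) * exp (-(a ^ 2) / (2 * q))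
      = penaltyOfStdDev a √q := by
  have hexp : -(a ^ 2) / (2 * q) = -((a / √q) ^ 2) / 2 := by
    rw [div_pow, sq_sqrt hq]; ring
  rw [penaltyOfStdDev, stdNormalPDF, sq_sqrt hq, sqrt_div' _ two_pi_pos.le, hexp]
  ring

/-- The expected quadratic penalty is monotone increasing in the variance `q` on `(0, ∞)`. -/
theorem penalty_monotone_in_variance (m xbar : ℝ) :
    MonotoneOn (fun q : ℝ =>
      ((m - xbar) ^ 2 + q) * stdNormalCDF ((m - xbar) / Real.sqrt q)
        + (m - xbar) * Real.sqrt (q / (2 * Real.pi)) *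
          Real.exp (-((m - xbar) ^ 2) / (2 * q)))
      (Set.Ioi (0 : ℝ)) := by
  have hmono : MonotoneOn (fun q => penaltyOfStdDev (m - xbar) √q) (Ioi 0) :=
    (monotoneOn_penaltyOfStdDev _).comp (fun _ _ _ _ h => sqrt_le_sqrt h)
      fun _ hq => sqrt_pos.2 hq
  exact hmono.congr fun q hq => (penalty_eq_penaltyOfStdDev _ (le_of_lt hq)).symm
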